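/- If M is a path-connected topological monoid in which every element is idempotent (m·m = m for all m), then for every basepoint m₀ ∈ M and every n ≥ 1, the homotopy group πₙ(M, m₀) is trivial. -/

import Mathlib

open scoped unitInterval Topology
open Set

set_option linter.unusedSectionVars false
set_option maxHeartbeats 1000000

noncomputable section

namespace IdemHG

variable {M : Type*} [TopologicalSpace M] [Monoid M] [ContinuousMul M]
variable {N : Type*} [Fintype N] [Nonempty N]

/-! ### Pointwise multiplication of generalized loops -/

def mulLoop {x : M} (hx : x * x = x) (f g : GenLoop N M x) : GenLoop N M x :=
  ⟨⟨fun z => f z * g z, ((map_continuous f.1).mul (map_continuous g.1))⟩,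
    fun y hy => by
      show f.1 y * g.1 y = x
      rw [f.2 y hy, g.2 y hy, hx]⟩

@[simp] lemma mulLoop_apply {x : M} (hx : x * x = x) (f g : GenLoop N M x) (z : I^N) :
    mulLoop hx f g z = f z * g z := rfl

lemma homotopic_mul {x : M} (hx : x * x = x) {f f' g g' : GenLoop N M x}
    (hf : GenLoop.Homotopic f f') (hg : GenLoop.Homotopic g g') :
    GenLoop.Homotopic (mulLoop hx f g) (mulLoop hx f' g') := by
  obtain ⟨F⟩ := hf; obtain ⟨G⟩ := hg
  exact ⟨{ toFun := fun p => F p * G p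
           continuous_toFun := F.continuous.mul G.continuous
           map_zero_left := fun z => by
             show F (0, z) * G (0, z) = _
             rw [F.apply_zero, G.apply_zero]; rfl
           map_one_left := fun z => by
             show F (1, z) * G (1, z) = _
             rw [F.apply_one, G.apply_one]; rfl
           prop' := fun t z hz => by
             simp only [ContinuousMap.coe_mk]
             rw [F.eq_fst t hz, G.eq_fst t hz]
             rfl }⟩

lemma transAt_apply [DecidableEq N] {X : Type*} [TopologicalSpace X] {x : X} (i : N) (f g : GenLoop N X x)
    (z : I^N) :
    GenLoop.transAt i f g z = if (z i : ℝ) ≤ 1 / 2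
      then f (Function.update z i <| Set.projIcc 0 1 zero_le_one (2 * z i))
      else g (Function.update z i <| Set.projIcc 0 1 zero_le_one (2 * z i - 1)) := rfl

/-! ### Eckmann–Hilton at the unit -/

lemma mul_class [DecidableEq N] (f g : GenLoop N M 1) :
    ((· * ·) : _ → _ → HomotopyGroup N M 1) ⟦f⟧ ⟦g⟧ = ⟦mulLoop (mul_one 1) g f⟧ := by
  have i : N := Classical.arbitrary N
  rw [HomotopyGroup.mul_spec (i := i)]
  have key : GenLoop.transAt i g f
      = mulLoop (mul_one 1) (GenLoop.transAt i g GenLoop.const)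
          (GenLoop.transAt i GenLoop.const f) := by
    ext z
    simp only [transAt_apply, mulLoop_apply, GenLoop.const_apply]
    split_ifs <;> simp
  have e1 : (⟦GenLoop.transAt i g GenLoop.const⟧ : HomotopyGroup N M 1) = ⟦g⟧ :=
    (HomotopyGroup.mul_spec (i := i)).symm.trans (one_mul _)
  have e2 : (⟦GenLoop.transAt i GenLoop.const f⟧ : HomotopyGroup N M 1) = ⟦f⟧ :=
    (HomotopyGroup.mul_spec (i := i)).symm.trans (mul_one _)
  rw [key]
  exact Quotient.sound (homotopic_mul _ (Quotient.exact e1) (Quotient.exact e2))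

lemma trivial_at_one [DecidableEq N] (hidem : ∀ m : M, m * m = m) (f : GenLoop N M 1) :
    GenLoop.Homotopic f GenLoop.const := by
  have hff : mulLoop (mul_one 1) f f = f := by
    ext z; exact hidem _
  have e : (⟦mulLoop (mul_one 1) f f⟧ : HomotopyGroup N M 1) = ⟦f⟧ := by rw [hff]
  have h2 := (mul_class (N := N) f f).trans e
  exact Quotient.exact ((mul_eq_right.mp h2).trans HomotopyGroup.one_def)

/-! ### Cube geometry: distance to the boundary, affine squeezing maps -/

def dC (z : I^N) : ℝ := Finset.univ.inf' Finset.univ_nonempty fun j => min (z j : ℝ) (1 - z j)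

lemma dC_nonneg (z : I^N) : 0 ≤ dC z :=
  Finset.le_inf' _ _ fun j _ => le_min (z j).2.1 (by linarith [(z j).2.2])

lemma dC_le (z : I^N) (j : N) : dC z ≤ min (z j : ℝ) (1 - z j) :=
  Finset.inf'_le _ (Finset.mem_univ j)

lemma dC_eq_zero_iff (z : I^N) : dC z = 0 ↔ z ∈ Cube.boundary N := by
  constructor
  · intro h
    obtain ⟨j, -, hj⟩ := Finset.exists_mem_eq_inf' (Finset.univ_nonempty)
      (fun j => min (z j : ℝ) (1 - z j))
    have h2 : min ((z j : ℝ)) (1 - z j) = 0 := by rw [← hj]; exact h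
    refine ⟨j, ?_⟩
    rcases le_total ((z j : ℝ)) (1 - z j) with hle | hle
    · left
      rw [min_eq_left hle] at h2
      exact Set.Icc.coe_eq_zero.1 h2
    · right
      rw [min_eq_right hle] at h2
      have : (z j : ℝ) = 1 := by linarith
      exact Set.Icc.coe_eq_one.1 this
  · rintro ⟨j, hj | hj⟩
    · refine le_antisymm ?_ (dC_nonneg z)
      have := dC_le z j
      rw [hj] at this
      simpa using this.trans (min_le_left _ _)
    · refine le_antisymm ?_ (dC_nonneg z)
      have := dC_le z j
      rw [hj] at this
      simpa using this.trans (min_le_right _ _)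

lemma boundary_of_dC_le {z : I^N} (h : dC z ≤ 0) : z ∈ Cube.boundary N :=
  (dC_eq_zero_iff z).1 (le_antisymm h (dC_nonneg z))

lemma continuous_inf' {α : Type*} [TopologicalSpace α] {ι : Type*} {s : Finset ι}
    (hs : s.Nonempty) (f : ι → α → ℝ) (hf : ∀ i, Continuous (f i)) :
    Continuous fun x => s.inf' hs fun i => f i x := by
  induction hs using Finset.Nonempty.cons_induction with
  | singleton a => simpa using hf a
  | cons a s ha hs ih =>
      have heq : (fun x => (Finset.cons a s ha).inf' (Finset.cons_nonempty ha) fun i => f i x)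
          = fun x => min (f a x) (s.inf' hs fun i => f i x) := by
        funext x
        rw [Finset.inf'_cons]
      rw [heq]
      exact (hf a).min ih

lemma continuous_dC : Continuous (dC (N := N)) :=
  continuous_inf' _ _ fun j =>
    (continuous_subtype_val.comp (continuous_apply j)).min
      (continuous_const.sub (continuous_subtype_val.comp (continuous_apply j)))

def aff (a : ℝ) (z : I^N) : I^N := fun j =>
  Set.projIcc 0 1 zero_le_one (a * (z j : ℝ) + (1 - a) / 2)

lemma continuous_aff {α : Type*} [TopologicalSpace α] {a : α → ℝ} {z : α → I^N}
    (ha : Continuous a) (hz : Continuous z) : Continuous fun x => aff (a x) (z x) :=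
  continuous_pi fun j =>
    continuous_projIcc.comp
      (((ha.mul (continuous_subtype_val.comp ((continuous_apply j).comp hz))).add
        ((continuous_const.sub ha).div_const 2)))

lemma aff_one (z : I^N) : aff 1 z = z := by
  funext j
  simp only [aff]
  rw [show (1 : ℝ) * (z j : ℝ) + (1 - 1) / 2 = (z j : ℝ) by ring,
    Set.projIcc_of_mem _ (z j).2]

lemma min_proj (a : ℝ) (ha : 1 ≤ a) (x : I) :
    min ((Set.projIcc 0 1 zero_le_one (a * (x : ℝ) + (1 - a) / 2) : I) : ℝ)
        (1 - (Set.projIcc 0 1 zero_le_one (a * (x : ℝ) + (1 - a) / 2) : I))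
      = max 0 (a * min (x : ℝ) (1 - x) + (1 - a) / 2) := by
  have hx0 : (0 : ℝ) ≤ x := x.2.1
  have hx1 : (x : ℝ) ≤ 1 := x.2.2
  rw [Set.coe_projIcc]
  rcases le_total (x : ℝ) (1 - x) with h | h
  · rw [min_eq_left h]
    have h2 : a * (x : ℝ) + (1 - a) / 2 ≤ 1 / 2 := by nlinarith
    rw [min_eq_right (by linarith : a * (x : ℝ) + (1 - a) / 2 ≤ 1)]
    rcases le_total (a * (x : ℝ) + (1 - a) / 2) 0 with h3 | h3
    · rw [max_eq_left h3]
      norm_num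
    · rw [max_eq_right h3, min_eq_left (by linarith)]
  · rw [min_eq_right h]
    have h2 : (1 : ℝ) / 2 ≤ a * (x : ℝ) + (1 - a) / 2 := by nlinarith
    have key : a * (1 - (x : ℝ)) + (1 - a) / 2 = 1 - (a * (x : ℝ) + (1 - a) / 2) := by ring
    rw [key]
    rcases le_total (a * (x : ℝ) + (1 - a) / 2) 1 with h3 | h3
    · rw [min_eq_right h3, max_eq_right (by linarith : (0:ℝ) ≤ a * (x : ℝ) + (1 - a) / 2),
        min_eq_right (by linarith), max_eq_right (by linarith : (0:ℝ) ≤ 1 - (a * (x : ℝ) + (1 - a) / 2))]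
    · rw [min_eq_left h3, max_eq_right (by norm_num : (0:ℝ) ≤ 1),
        max_eq_left (by linarith : 1 - (a * (x : ℝ) + (1 - a) / 2) ≤ 0)]
      norm_num

lemma dC_aff (a : ℝ) (ha : 1 ≤ a) (z : I^N) :
    dC (aff a z) = max 0 (a * dC z + (1 - a) / 2) := by
  have hmono : Monotone fun t : ℝ => max 0 (a * t + (1 - a) / 2) := by
    intro s t hst
    exact max_le_max le_rfl (by nlinarith)
  have step1 : dC (aff a z)
      = Finset.univ.inf' Finset.univ_nonempty
          fun j => max 0 (a * min (z j : ℝ) (1 - z j) + (1 - a) / 2) := by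
    unfold dC aff
    exact Finset.inf'_congr _ rfl fun j _ => min_proj a ha (z j)
  rw [step1]
  have hcomp := Finset.apply_inf'_eq_inf'_comp (Finset.univ_nonempty (α := N))
    (f := fun j => min (z j : ℝ) (1 - z j))
    (fun t : ℝ => max 0 (a * t + (1 - a) / 2))
    (fun s t => by exact hmono.map_min)
  exact hcomp.symm

lemma aff_comp (a a' : ℝ) (ha : 1 ≤ a) (ha' : 1 ≤ a') (z : I^N) :
    aff a (aff a' z) = aff (a * a') z := by
  funext j
  simp only [aff]
  apply Subtype.ext
  rw [Set.coe_projIcc, Set.coe_projIcc, Set.coe_projIcc,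
    show a * a' * (z j : ℝ) + (1 - a * a') / 2
      = a * (a' * (z j : ℝ) + (1 - a') / 2) + (1 - a) / 2 by ring]
  generalize (a' * ((z j : ℝ)) + (1 - a') / 2) = u
  have hb : (1 - a) / 2 ≤ 0 := by linarith
  have hab : 1 ≤ a + (1 - a) / 2 := by linarith
  rcases le_total u 0 with h1 | h1
  · have hau : a * u ≤ 0 := mul_nonpos_of_nonneg_of_nonpos (by linarith) h1
    rw [min_eq_right (by linarith : u ≤ 1), max_eq_left h1, mul_zero, zero_add,
      min_eq_right (by linarith : (1 - a) / 2 ≤ 1), max_eq_left hb,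
      min_eq_right (by linarith : a * u + (1 - a) / 2 ≤ 1), max_eq_left (by linarith)]
  · rcases le_total u 1 with h2 | h2
    · rw [min_eq_right h2, max_eq_right h1]
    · have hau : a * 1 ≤ a * u := by nlinarith
      rw [min_eq_left h2, max_eq_right (by norm_num : (0:ℝ) ≤ 1), mul_one,
        min_eq_left (by linarith : (1:ℝ) ≤ a + (1 - a) / 2),
        min_eq_left (by linarith : (1:ℝ) ≤ a * u + (1 - a) / 2)]

/-! ### The homotopy chain -/

section Chain

variable {m₀ : M} (q : Path (1 : M) m₀) (γ : GenLoop N M m₀)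

/-- The auxiliary generalized loop at the unit, obtained from `γ` by squeezing and
inserting a collar running along `q`. -/
def delta : GenLoop N M 1 :=
  ⟨⟨fun w => if dC w ≤ 1/6 then q.extend (6 * dC w) else γ (aff (3/2) w), by
    refine Continuous.if_le ?_ ?_ continuous_dC continuous_const ?_
    · exact q.continuous_extend.comp (continuous_const.mul continuous_dC)
    · exact (map_continuous γ.1).comp (continuous_aff continuous_const continuous_id)
    · intro w hw
      have hb : dC (aff ((3:ℝ)/2) w) = 0 := by
        rw [dC_aff _ (by norm_num), hw]; norm_num
      rw [GenLoop.boundary γ _ ((dC_eq_zero_iff _).1 hb), hw,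
        show (6 : ℝ) * (1/6) = 1 by norm_num, Path.extend_one]⟩, by
    intro y hy
    have h0 : dC y = 0 := (dC_eq_zero_iff y).2 hy
    show (if dC y ≤ 1/6 then q.extend (6 * dC y) else γ (aff (3/2) y)) = 1
    rw [if_pos (by rw [h0]; norm_num), h0, mul_zero, Path.extend_zero]⟩

lemma delta_apply (w : I^N) :
    delta q γ w = if dC w ≤ 1/6 then q.extend (6 * dC w) else γ (aff (3/2) w) := rfl

/-- Intermediate map `G0`: `γ` squeezed to the inner cube, constant `m₀` on a collar. -/
def G0 : GenLoop N M m₀ :=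
  ⟨⟨fun z => if dC z ≤ 1/4 then m₀ else γ (aff 2 z), by
    refine Continuous.if_le continuous_const
      ((map_continuous γ.1).comp (continuous_aff continuous_const continuous_id))
      continuous_dC continuous_const ?_
    intro z hz
    have hb : dC (aff (2 : ℝ) z) = 0 := by
      rw [dC_aff _ (by norm_num), hz]; norm_num
    exact (GenLoop.boundary γ _ ((dC_eq_zero_iff _).1 hb)).symm⟩, by
    intro y hy
    have h0 : dC y = 0 := (dC_eq_zero_iff y).2 hy
    show (if dC y ≤ 1/4 then m₀ else γ (aff 2 y)) = m₀
    rw [if_pos (by rw [h0]; norm_num)]⟩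

/-- The target of the second homotopy: an outer collar along `q.symm`, an inner collar
along `q`, then `γ` squeezed into the inner cube. -/
def TT : GenLoop N M m₀ :=
  ⟨⟨fun z => if dC z ≤ 1/8 then q.symm.extend (8 * dC z)
      else delta q γ (aff (4/3) z), by
    refine Continuous.if_le ?_ ?_ continuous_dC continuous_const ?_
    · exact q.symm.continuous_extend.comp (continuous_const.mul continuous_dC)
    · exact (map_continuous (delta q γ).1).comp
        (continuous_aff continuous_const continuous_id)
    · intro z hz
      have hb : dC (aff ((4:ℝ)/3) z) = 0 := by
        rw [dC_aff _ (by norm_num), hz]; norm_num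
      rw [GenLoop.boundary (delta q γ) _ ((dC_eq_zero_iff _).1 hb), hz,
        show (8 : ℝ) * (1/8) = 1 by norm_num, Path.extend_one]⟩, by
    intro y hy
    have h0 : dC y = 0 := (dC_eq_zero_iff y).2 hy
    show (if dC y ≤ 1/8 then q.symm.extend (8 * dC y) else delta q γ (aff (4/3) y)) = m₀
    rw [if_pos (by rw [h0]; norm_num), h0, mul_zero, Path.extend_zero]⟩

/-- The end of the chain before the final contraction: just the outer collar. -/
def W : GenLoop N M m₀ :=
  ⟨⟨fun z => q.symm.extend (8 * dC z),
    q.symm.continuous_extend.comp (continuous_const.mul continuous_dC)⟩, by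
    intro y hy
    have h0 : dC y = 0 := (dC_eq_zero_iff y).2 hy
    show q.symm.extend (8 * dC y) = m₀
    rw [h0, mul_zero, Path.extend_zero]⟩

/-- Homotopy A : `γ ~ G0`, squeezing `γ` into the inner cube. -/
def homA : ContinuousMap.HomotopyRel γ.1 (G0 (m₀ := m₀) γ).1 (Cube.boundary N) where
  toFun p := if dC p.2 ≤ (p.1 : ℝ)/4 then m₀ else γ (aff (1 + p.1) p.2)
  continuous_toFun := by
    refine Continuous.if_le continuous_const
      ((map_continuous γ.1).comp (continuous_aff
        (continuous_const.add (continuous_subtype_val.comp continuous_fst)) continuous_snd))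
      (continuous_dC.comp continuous_snd)
      ((continuous_subtype_val.comp continuous_fst).div_const 4) ?_
    rintro ⟨s, z⟩ hz
    dsimp only at hz ⊢
    have hs0 : (0:ℝ) ≤ s := s.2.1
    have hs1 : (s:ℝ) ≤ 1 := s.2.2
    have hb : dC (aff (1 + (s:ℝ)) z) = 0 := by
      rw [dC_aff _ (by linarith)]
      exact max_eq_left (by rw [hz]; nlinarith)
    exact (GenLoop.boundary γ _ ((dC_eq_zero_iff _).1 hb)).symm
  map_zero_left z := by
    change (if dC z ≤ ((0:I) : ℝ)/4 then m₀ else γ (aff (1 + ((0:I):ℝ)) z)) = γ.1 z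
    rw [show ((0:I):ℝ) = 0 from rfl]
    rw [show (0:ℝ)/4 = 0 by norm_num, show (1:ℝ) + 0 = 1 by norm_num, aff_one]
    split_ifs with h
    · exact (GenLoop.boundary γ z (boundary_of_dC_le h)).symm
    · rfl
  map_one_left z := by
    change (if dC z ≤ ((1:I) : ℝ)/4 then m₀ else γ (aff (1 + ((1:I):ℝ)) z))
      = if dC z ≤ 1/4 then m₀ else γ (aff 2 z)
    rw [show ((1:I):ℝ) = 1 from rfl, show (1:ℝ) + 1 = 2 by norm_num]
  prop' t z hz := by
    have h0 : dC z = 0 := (dC_eq_zero_iff z).2 hz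
    have ht : (0:ℝ) ≤ t := t.2.1
    show (if dC z ≤ (t : ℝ)/4 then m₀ else γ (aff (1 + t) z)) = γ.1 z
    rw [if_pos (by rw [h0]; positivity)]
    exact (GenLoop.boundary γ z hz).symm

/-- Homotopy B : `G0 ~ TT`, growing the trivial collar `refl m₀` into `q.symm.trans q`. -/
def homB : ContinuousMap.HomotopyRel (G0 (m₀ := m₀) γ).1 (TT q γ).1 (Cube.boundary N) := by
  have RTS0 := Path.Homotopy.reflTransSymm q.symm
  rw [Path.symm_symm] at RTS0
  refine
  { toFun := fun p => if dC p.2 ≤ 1/4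
      then RTS0 (p.1, Set.projIcc 0 1 zero_le_one (4 * dC p.2))
      else γ (aff 2 p.2)
    continuous_toFun := ?_
    map_zero_left := ?_
    map_one_left := ?_
    prop' := ?_ }
  · refine Continuous.if_le ?_
      ((map_continuous γ.1).comp (continuous_aff continuous_const continuous_snd))
      (continuous_dC.comp continuous_snd) continuous_const ?_
    · exact RTS0.continuous.comp (continuous_fst.prodMk
        (continuous_projIcc.comp (continuous_const.mul (continuous_dC.comp continuous_snd))))
    · rintro ⟨s, z⟩ hz
      dsimp only at hz ⊢
      have hb : dC (aff (2:ℝ) z) = 0 := by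
        rw [dC_aff _ (by norm_num), hz]; norm_num
      have hp : Set.projIcc 0 1 zero_le_one (4 * dC z) = 1 := by
        rw [hz, show (4:ℝ) * (1/4) = 1 by norm_num]
        exact Set.projIcc_right _
      rw [hp, RTS0.eq_fst s (by right; rfl)]
      exact (GenLoop.boundary γ _ ((dC_eq_zero_iff _).1 hb)).symm
  · intro z
    change (if dC z ≤ 1/4 then RTS0 (0, Set.projIcc 0 1 zero_le_one (4 * dC z))
        else γ (aff 2 z)) = if dC z ≤ 1/4 then m₀ else γ (aff 2 z)
    split_ifs with h
    · rw [RTS0.apply_zero]; rfl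
    · rfl
  · intro z
    change (if dC z ≤ 1/4 then RTS0 (1, Set.projIcc 0 1 zero_le_one (4 * dC z))
        else γ (aff 2 z))
      = if dC z ≤ 1/8 then q.symm.extend (8 * dC z) else delta q γ (aff (4/3) z)
    have hd0 : 0 ≤ dC z := dC_nonneg z
    split_ifs with h1 h2 h2
    · -- dC z ≤ 1/4, dC z ≤ 1/8 : outer collar
      rw [RTS0.apply_one]
      have hco : ((Set.projIcc 0 1 zero_le_one (4 * dC z) : I) : ℝ) = 4 * dC z := by
        rw [Set.coe_projIcc, min_eq_right (by linarith), max_eq_right (by positivity)]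
      show (q.symm.trans q) _ = _
      rw [Path.trans_apply, dif_pos (by rw [hco]; linarith),
        Path.extend_apply q.symm (t := 8 * dC z) ⟨by positivity, by linarith⟩]
      congr 1
      apply Subtype.ext
      show 2 * ((Set.projIcc 0 1 zero_le_one (4 * dC z) : I) : ℝ) = 8 * dC z
      rw [hco]; ring
    · -- dC z ≤ 1/4, ¬(dC z ≤ 1/8) : middle collar
      push_neg at h2
      rw [RTS0.apply_one]
      have hco : ((Set.projIcc 0 1 zero_le_one (4 * dC z) : I) : ℝ) = 4 * dC z := by
        rw [Set.coe_projIcc, min_eq_right (by linarith), max_eq_right (by positivity)]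
      have hdel : dC (aff ((4:ℝ)/3) z) = (4:ℝ)/3 * dC z + (1 - (4:ℝ)/3)/2 := by
        rw [dC_aff _ (by norm_num)]
        exact max_eq_right (by linarith)
      show (q.symm.trans q) _ = _
      rw [Path.trans_apply, dif_neg (by rw [hco]; push_neg; linarith),
        delta_apply, if_pos (by rw [hdel]; linarith),
        Path.extend_apply q (t := 6 * dC (aff ((4:ℝ)/3) z))
          ⟨by rw [hdel]; linarith, by rw [hdel]; linarith⟩]
      congr 1
      apply Subtype.ext
      show 2 * ((Set.projIcc 0 1 zero_le_one (4 * dC z) : I) : ℝ) - 1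
        = 6 * dC (aff ((4:ℝ)/3) z)
      rw [hco, hdel]; ring
    · exact absurd (h2.trans (by norm_num)) h1
    · -- inner part
      push_neg at h1
      have hdel : dC (aff ((4:ℝ)/3) z) = (4:ℝ)/3 * dC z + (1 - (4:ℝ)/3)/2 := by
        rw [dC_aff _ (by norm_num)]
        exact max_eq_right (by linarith)
      rw [delta_apply, if_neg (by rw [hdel]; push_neg; linarith),
        aff_comp _ _ (by norm_num) (by norm_num),
        show (3:ℝ)/2 * (4/3) = 2 by norm_num]
  · intro t z hz
    have h0 : dC z = 0 := (dC_eq_zero_iff z).2 hz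
    show (if dC z ≤ 1/4 then RTS0 (t, Set.projIcc 0 1 zero_le_one (4 * dC z))
        else γ (aff 2 z)) = (G0 (m₀ := m₀) γ).1 z
    rw [if_pos (by rw [h0]; norm_num)]
    have hp : Set.projIcc 0 1 zero_le_one (4 * dC z) = 0 := by
      rw [h0, mul_zero]
      exact Set.projIcc_left _
    rw [hp, RTS0.eq_fst t (by left; rfl)]
    exact (GenLoop.boundary (G0 (m₀ := m₀) γ) z hz).symm

/-- Homotopy C : `TT ~ W`, contracting `delta` inside the outer collar. -/
def homC (K : ContinuousMap.HomotopyRel (delta q γ).1 (GenLoop.const : GenLoop N M 1).1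
    (Cube.boundary N)) :
    ContinuousMap.HomotopyRel (TT q γ).1 (W (m₀ := m₀) q).1 (Cube.boundary N) where
  toFun p := if dC p.2 ≤ 1/8 then q.symm.extend (8 * dC p.2) else K (p.1, aff (4/3) p.2)
  continuous_toFun := by
    refine Continuous.if_le
      (q.symm.continuous_extend.comp (continuous_const.mul (continuous_dC.comp continuous_snd)))
      (K.continuous.comp (continuous_fst.prodMk (continuous_aff continuous_const continuous_snd)))
      (continuous_dC.comp continuous_snd) continuous_const ?_
    rintro ⟨s, z⟩ hz
    dsimp only at hz ⊢
    have hb : dC (aff ((4:ℝ)/3) z) = 0 := by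
      rw [dC_aff _ (by norm_num), hz]; norm_num
    have hbd := (dC_eq_zero_iff _).1 hb
    rw [K.eq_fst s hbd, hz, show (8:ℝ) * (1/8) = 1 by norm_num, Path.extend_one]
    exact (GenLoop.boundary (delta q γ) _ hbd).symm
  map_zero_left z := by
    change (if dC z ≤ 1/8 then q.symm.extend (8 * dC z) else K (0, aff (4/3) z))
      = if dC z ≤ 1/8 then q.symm.extend (8 * dC z) else delta q γ (aff (4/3) z)
    split_ifs with h
    · rfl
    · rw [K.apply_zero]; rfl
  map_one_left z := by
    change (if dC z ≤ 1/8 then q.symm.extend (8 * dC z) else K (1, aff (4/3) z))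
      = q.symm.extend (8 * dC z)
    split_ifs with h
    · rfl
    · push_neg at h
      rw [K.apply_one, Path.extend_of_one_le _ (by linarith)]
      rfl
  prop' t z hz := by
    have h0 : dC z = 0 := (dC_eq_zero_iff z).2 hz
    show (if dC z ≤ 1/8 then q.symm.extend (8 * dC z) else K (t, aff (4/3) z))
      = (TT q γ).1 z
    rw [if_pos (by rw [h0]; norm_num)]
    exact (GenLoop.boundary (TT q γ) z hz).symm ▸
      (GenLoop.boundary (W (m₀ := m₀) q) z hz)

/-- Homotopy D : `W ~ const`, contracting the outer collar. -/
def homD : ContinuousMap.HomotopyRel (W (m₀ := m₀) q).1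
    (GenLoop.const : GenLoop N M m₀).1 (Cube.boundary N) where
  toFun p := q.symm.extend ((1 - (p.1 : ℝ)) * (8 * dC p.2))
  continuous_toFun :=
    q.symm.continuous_extend.comp
      ((continuous_const.sub (continuous_subtype_val.comp continuous_fst)).mul
        (continuous_const.mul (continuous_dC.comp continuous_snd)))
  map_zero_left z := by
    show q.symm.extend ((1 - ((0:I) : ℝ)) * (8 * dC z)) = q.symm.extend (8 * dC z)
    rw [show ((0:I):ℝ) = 0 from rfl]
    norm_num
  map_one_left z := by
    show q.symm.extend ((1 - ((1:I) : ℝ)) * (8 * dC z)) = m₀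
    rw [show ((1:I):ℝ) = 1 from rfl]
    norm_num [Path.extend_zero]
  prop' t z hz := by
    have h0 : dC z = 0 := (dC_eq_zero_iff z).2 hz
    show q.symm.extend ((1 - (t : ℝ)) * (8 * dC z)) = (W (m₀ := m₀) q).1 z
    rw [h0]
    norm_num [Path.extend_zero]
    exact (GenLoop.boundary (W (m₀ := m₀) q) z hz).symm

end Chain

end IdemHG

/-- If `M` is a path-connected topological monoid in which every element is idempotent
(`m * m = m` for all `m`), then for every basepoint `m₀ ∈ M` and every `n ≥ 1`
(here `n + 1`), the homotopy group `πₙ(M, m₀)` is trivial. -/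
theorem pathConnected_idempotent_topMonoid_homotopyGroup_trivial
    {M : Type*} [TopologicalSpace M] [Monoid M] [ContinuousMul M]
    [PathConnectedSpace M] (hidem : ∀ m : M, m * m = m) (m₀ : M) (n : ℕ) :
    ∀ g : HomotopyGroup (Fin (n + 1)) M m₀, g = 1 := by
  intro g
  induction g using Quotient.ind with
  | _ γ =>
    obtain ⟨q⟩ : Nonempty (Path (1 : M) m₀) := (PathConnectedSpace.joined 1 m₀)
    have hdelta : GenLoop.Homotopic (IdemHG.delta q γ) GenLoop.const :=
      IdemHG.trivial_at_one hidem _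
    obtain ⟨K⟩ := hdelta
    have chain : GenLoop.Homotopic γ (GenLoop.const : GenLoop (Fin (n+1)) M m₀) :=
      GenLoop.Homotopic.trans ⟨IdemHG.homA γ⟩
        (GenLoop.Homotopic.trans ⟨IdemHG.homB q γ⟩
          (GenLoop.Homotopic.trans ⟨IdemHG.homC q γ K⟩ ⟨IdemHG.homD q⟩))
    exact Quotient.sound chain
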